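/- Let h be an M-convex function with finite nonempty effective domain and let b : E → {0,1}. Assume k̲ + 1 ≤ k̄. Then for any i with k̲ + 1 ≤ i ≤ k̄, any x ∈ 𝒮_i, and any x' ∈ 𝒮_{k̲}, there exists a minimum transition (u,v) with respect to x such that x(u) > x'(u) and x'(v) > x(v). -/

import Mathlib

open scoped BigOperators

/-- Characteristic vector of a singleton `{u}`. -/
def chiv {E : Type*} [DecidableEq E] (u : E) : E → ℤ := fun e => if e = u then 1 else 0

/-- M-convexity (with nonempty effective domain) for `h : (E → ℤ) → ℝ ∪ {+∞}`. -/
def MConvex {E : Type*} [DecidableEq E] (h : (E → ℤ) → WithTop ℝ) : Prop :=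
  (∃ x, h x < ⊤) ∧
  ∀ x y : E → ℤ, h x < ⊤ → h y < ⊤ → ∀ u : E, y u < x u →
    ∃ v : E, x v < y v ∧
      h (x - chiv u + chiv v) + h (y + chiv u - chiv v) ≤ h x + h y

/-- `⟨b,x⟩ = ∑ e, b e * x e`. -/
def innerb {E : Type*} [Fintype E] (b : E → ℤ) (x : E → ℤ) : ℤ := ∑ e, b e * x e

/-- `𝒮_i`: the minimizers of `h` on `𝒬_i = {x ∈ dom h : ⟨b,x⟩ = i}`. -/
def Sset {E : Type*} [Fintype E] (h : (E → ℤ) → WithTop ℝ) (b : E → ℤ) (i : ℤ) :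
    Set (E → ℤ) :=
  {x | h x < ⊤ ∧ innerb b x = i ∧ ∀ y : E → ℤ, h y < ⊤ → innerb b y = i → h x ≤ h y}

/-- A transition `(u,v)` with respect to `x`: `u ∈ E₁`, `v ∈ E₀`, and
`x - χ_u + χ_v ∈ dom h`. -/
def IsTransitionM {E : Type*} [DecidableEq E] (h : (E → ℤ) → WithTop ℝ) (b : E → ℤ)
    (x : E → ℤ) (u v : E) : Prop :=
  b u = 1 ∧ b v = 0 ∧ h (x - chiv u + chiv v) < ⊤

/-- The cost `h(x;u,v) = h(x - χ_u + χ_v) - h(x)` of a transition. -/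
noncomputable def transCostM {E : Type*} [DecidableEq E] (h : (E → ℤ) → WithTop ℝ)
    (x : E → ℤ) (u v : E) : ℝ :=
  (h (x - chiv u + chiv v)).untopD 0 - (h x).untopD 0

/-- A minimum transition with respect to `x`. -/
def IsMinTransitionM {E : Type*} [Fintype E] [DecidableEq E] (h : (E → ℤ) → WithTop ℝ)
    (b : E → ℤ) (x : E → ℤ) (u v : E) : Prop :=
  IsTransitionM h b x u v ∧
    ∀ u' v' : E, IsTransitionM h b x u' v' →
      transCostM h x u v ≤ transCostM h x u' v'

/-!
Every transition from `x ∈ 𝒮_i` lands on level `i - 1`, so the minimum transitions are exactly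
those landing in `𝒮_{i-1}`. By the exchange axiom the levels of `dom h` form an interval and some
transition does land in `𝒮_{i-1}`; among these, take one whose target `z` is `ℓ¹`-closest to `x'`.
If the sign condition failed at `u` or at `v`, exchanging between `z` and `x'` would produce a
point on level `k̲`, hence of value at least `h x'`, together with a point of `𝒮_{i-1}` that is
again the target of a transition from `x` but strictly closer to `x'`.
-/

theorem MConvex.exists_exchange {E : Type*} [DecidableEq E] {h : (E → ℤ) → WithTop ℝ}
    (hM : MConvex h) {x y : E → ℤ} (hx : h x < ⊤)
    (hy : h y < ⊤) {u : E} (hu : y u < x u) :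
    ∃ v, x v < y v ∧ h (x - chiv u + chiv v) < ⊤ ∧ h (y + chiv u - chiv v) < ⊤ ∧
      h (x - chiv u + chiv v) + h (y + chiv u - chiv v) ≤ h x + h y := by
  obtain ⟨v, hv, hle⟩ := hM.2 x y hx hy u hu
  obtain ⟨hx'fin, hy'fin⟩ :=
    WithTop.add_lt_top.mp (hle.trans_lt (WithTop.add_lt_top.mpr ⟨hx, hy⟩))
  exact ⟨v, hv, hx'fin, hy'fin, hle⟩

section Exchange

variable {E : Type*} [Fintype E]

def l1dist (x y : E → ℤ) : ℕ := ∑ e, (x e - y e).natAbs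

theorem l1dist_add_chiv_sub_chiv_lt [DecidableEq E] {x y : E → ℤ} {u v : E}
    (hu : y u < x u) (hv : x v < y v) : l1dist x (y + chiv u - chiv v) < l1dist x y := by
  have huv : u ≠ v := by rintro rfl; omega
  apply Finset.sum_lt_sum
  · intro e _
    simp only [Pi.add_apply, Pi.sub_apply, chiv]
    split_ifs <;> subst_vars <;> omega
  · exact ⟨u, Finset.mem_univ u, by simp [chiv, huv]; omega⟩

@[simp]
theorem innerb_add (b x y : E → ℤ) : innerb b (x + y) = innerb b x + innerb b y := by
  simp [innerb, mul_add, Finset.sum_add_distrib]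

@[simp]
theorem innerb_sub (b x y : E → ℤ) : innerb b (x - y) = innerb b x - innerb b y := by
  simp [innerb, mul_sub, Finset.sum_sub_distrib]

@[simp]
theorem innerb_chiv [DecidableEq E] (b : E → ℤ) (u : E) : innerb b (chiv u) = b u := by
  simp [innerb, chiv]

theorem exists_lt_of_innerb_lt {b x y : E → ℤ} (hb : ∀ e, b e = 0 ∨ b e = 1)
    (hlt : innerb b y < innerb b x) : ∃ u, b u = 1 ∧ y u < x u := by
  by_contra! hle
  refine hlt.not_ge (Finset.sum_le_sum fun e _ => ?_)
  rcases hb e with h0 | h1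
  · simp [h0]
  · simpa [h1] using hle e h1

variable {h : (E → ℤ) → WithTop ℝ} {b : E → ℤ}

theorem Sset_innerb_nonempty (hfin : {x | h x < ⊤}.Finite) {z : E → ℤ}
    (hz : h z < ⊤) : (Sset h b (innerb b z)).Nonempty := by
  obtain ⟨a, ⟨ha, hab⟩, hmin⟩ := Set.exists_min_image
    {y | h y < ⊤ ∧ innerb b y = innerb b z} h (hfin.subset fun y hy => hy.1) ⟨z, hz, rfl⟩
  exact ⟨a, ha, hab, fun y hy hyb => hmin y ⟨hy, hyb⟩⟩

theorem mem_Sset_of_add_le {i j : ℤ} {x y x' y' : E → ℤ} (hx : x ∈ Sset h b i)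
    (hy : y ∈ Sset h b j) (hle : h x' + h y' ≤ h x + h y) (hx' : innerb b x' = i)
    (hy' : innerb b y' = j) : y' ∈ Sset h b j := by
  obtain ⟨hxfin, -, hxmin⟩ := hx
  obtain ⟨hyfin, -, hymin⟩ := hy
  obtain ⟨hx'fin, hy'fin⟩ :=
    WithTop.add_lt_top.mp (hle.trans_lt (WithTop.add_lt_top.mpr ⟨hxfin, hyfin⟩))
  have hy'y : h y' ≤ h y := (WithTop.add_le_add_iff_left hxfin.ne).mp
    ((add_le_add_left (hxmin x' hx'fin hx') _).trans hle)
  exact ⟨hy'fin, hy', fun z hz hzj => hy'y.trans (hymin z hz hzj)⟩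

variable [DecidableEq E]

theorem MConvex.exists_innerb_eq_sub_one (hM : MConvex h) (hb : ∀ e, b e = 0 ∨ b e = 1)
    {x y : E → ℤ} (hx : h x < ⊤) (hy : h y < ⊤) (hlt : innerb b y < innerb b x) :
    ∃ z, h z < ⊤ ∧ innerb b z = innerb b x - 1 := by
  obtain ⟨u, hbu, hyu⟩ := exists_lt_of_innerb_lt hb hlt
  obtain ⟨v, hxv, hx'fin, hy'fin, -⟩ := hM.exists_exchange hx hy hyu
  rcases hb v with hbv | hbv
  · exact ⟨_, hx'fin, by simp [hbu, hbv]⟩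
  · exact hM.exists_innerb_eq_sub_one hb hx hy'fin (by simpa [hbu, hbv] using hlt)
termination_by l1dist x y
decreasing_by exact l1dist_add_chiv_sub_chiv_lt hyu hxv

theorem MConvex.exists_sub_chiv_add_chiv_mem_Sset (hM : MConvex h)
    (hb : ∀ e, b e = 0 ∨ b e = 1) {i : ℤ} {x y : E → ℤ} (hx : x ∈ Sset h b i)
    (hy : y ∈ Sset h b (i - 1)) :
    ∃ u v, b u = 1 ∧ b v = 0 ∧ x - chiv u + chiv v ∈ Sset h b (i - 1) := by
  obtain ⟨u, hbu, hyu⟩ := exists_lt_of_innerb_lt hb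
    (by rw [hx.2.1, hy.2.1]; omega : innerb b y < innerb b x)
  obtain ⟨v, hxv, -, -, hle⟩ := hM.exists_exchange hx.1 hy.1 hyu
  rcases hb v with hbv | hbv
  · refine ⟨u, v, hbu, hbv, mem_Sset_of_add_le hx hy (by rwa [add_comm]) ?_ ?_⟩ <;>
      simp [hbu, hbv, hx.2.1, hy.2.1]
  · have hy' : y + chiv u - chiv v ∈ Sset h b (i - 1) :=
      mem_Sset_of_add_le hx hy hle (by simp [hbu, hbv, hx.2.1]) (by simp [hbu, hbv, hy.2.1])
    exact hM.exists_sub_chiv_add_chiv_mem_Sset hb hx hy'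
termination_by l1dist x y
decreasing_by exact l1dist_add_chiv_sub_chiv_lt hyu hxv

theorem MConvex.exists_add_chiv_sub_chiv_mem_Sset_closer (hM : MConvex h)
    (hb : ∀ e, b e = 0 ∨ b e = 1) {k j : ℤ} {x' z : E → ℤ} (hx' : x' ∈ Sset h b k)
    (hlow : ∀ y, h y < ⊤ → k ≤ innerb b y) (hz : z ∈ Sset h b j) {u : E} (hbu : b u = 1)
    (hu : z u < x' u) :
    ∃ s, b s = 1 ∧ z + chiv u - chiv s ∈ Sset h b j ∧
      l1dist x' (z + chiv u - chiv s) < l1dist x' z := by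
  obtain ⟨s, hs, ha, -, hle⟩ := hM.exists_exchange hx'.1 hz.1 hu
  have hbs : b s = 1 := by
    have := hlow _ ha
    rcases hb s with h0 | h1
    · simp [hbu, h0, hx'.2.1] at this
    · exact h1
  exact ⟨s, hbs, mem_Sset_of_add_le hx' hz hle (by simp [hbu, hbs, hx'.2.1])
    (by simp [hbu, hbs, hz.2.1]), l1dist_add_chiv_sub_chiv_lt hu hs⟩

theorem MConvex.exists_sub_chiv_add_chiv_mem_Sset_closer (hM : MConvex h)
    (hb : ∀ e, b e = 0 ∨ b e = 1) {k j : ℤ} {x' z : E → ℤ} (hx' : x' ∈ Sset h b k)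
    (hlow : ∀ y, h y < ⊤ → k ≤ innerb b y) (hz : z ∈ Sset h b j) {v : E} (hbv : b v = 0)
    (hv : x' v < z v) :
    ∃ t, b t = 0 ∧ z - chiv v + chiv t ∈ Sset h b j ∧
      l1dist x' (z - chiv v + chiv t) < l1dist x' z := by
  obtain ⟨t, ht, -, ha, hle⟩ := hM.exists_exchange hz.1 hx'.1 hv
  have hbt : b t = 0 := by
    have := hlow _ ha
    rcases hb t with h0 | h1
    · exact h0
    · simp [hbv, h1, hx'.2.1] at this
  refine ⟨t, hbt, mem_Sset_of_add_le (x' := x' + chiv v - chiv t) hx' hz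
    (by rwa [add_comm, add_comm (h x')])
    (by simp [hbv, hbt, hx'.2.1]) (by simp [hbv, hbt, hz.2.1]), ?_⟩
  rw [sub_add_eq_add_sub]
  exact l1dist_add_chiv_sub_chiv_lt ht hv

theorem isMinTransitionM_of_mem_Sset {i : ℤ} {x : E → ℤ} {u v : E} (hbu : b u = 1)
    (hbv : b v = 0) (hxi : innerb b x = i) (hS : x - chiv u + chiv v ∈ Sset h b (i - 1)) :
    IsMinTransitionM h b x u v := by
  refine ⟨⟨hbu, hbv, hS.1⟩, fun u' v' ⟨hbu', hbv', hfin'⟩ => sub_le_sub_right ?_ _⟩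
  have hle := hS.2.2 _ hfin' (by simp [hbu', hbv', hxi])
  lift h (x - chiv u' + chiv v') to ℝ using hfin'.ne with a
  lift h (x - chiv u + chiv v) to ℝ using hS.1.ne with c
  simpa using hle

end Exchange

theorem stmt_9_general {E : Type*} [Fintype E] [DecidableEq E]
    (h : (E → ℤ) → WithTop ℝ) (b : E → ℤ)
    (hM : MConvex h)
    (hfin : {x : E → ℤ | h x < ⊤}.Finite)
    (hb : ∀ e : E, b e = 0 ∨ b e = 1)
    (kmin : ℤ)
    (hkmin : (Sset h b kmin).Nonempty ∧ ∀ k : ℤ, (Sset h b k).Nonempty → kmin ≤ k)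
    (i : ℤ) (hi1 : kmin + 1 ≤ i)
    (x : E → ℤ) (hx : x ∈ Sset h b i)
    (x' : E → ℤ) (hx' : x' ∈ Sset h b kmin) :
    ∃ u v : E, IsMinTransitionM h b x u v ∧ x' u < x u ∧ x v < x' v := by
  have hlow : ∀ y, h y < ⊤ → kmin ≤ innerb b y :=
    fun y hy => hkmin.2 _ (Sset_innerb_nonempty hfin hy)
  obtain ⟨z, hz, hzi⟩ :=
    hM.exists_innerb_eq_sub_one hb hx.1 hx'.1 (by rw [hx.2.1, hx'.2.1]; omega)
  obtain ⟨y, hy⟩ : (Sset h b (i - 1)).Nonempty := hx.2.1 ▸ hzi ▸ Sset_innerb_nonempty hfin hz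
  obtain ⟨u₀, v₀, htrans⟩ := hM.exists_sub_chiv_add_chiv_mem_Sset hb hx hy
  obtain ⟨⟨u, v⟩, ⟨hbu, hbv, hS⟩, hclosest⟩ := Set.exists_min_image
    {p : E × E | b p.1 = 1 ∧ b p.2 = 0 ∧ x - chiv p.1 + chiv p.2 ∈ Sset h b (i - 1)}
    (fun p => l1dist x' (x - chiv p.1 + chiv p.2)) (Set.toFinite _) ⟨(u₀, v₀), htrans⟩
  have huv : u ≠ v := by rintro rfl; simp [hbu] at hbv
  refine ⟨u, v, isMinTransitionM_of_mem_Sset hbu hbv hx.2.1 hS, ?_, ?_⟩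
  · by_contra! hle
    obtain ⟨s, hbs, hS', hcloser⟩ := hM.exists_add_chiv_sub_chiv_mem_Sset_closer hb hx' hlow hS
      hbu (by simp [chiv, huv]; omega)
    rw [show x - chiv u + chiv v + chiv u - chiv s = x - chiv s + chiv v by abel] at hS' hcloser
    exact (hclosest (s, v) ⟨hbs, hbv, hS'⟩).not_gt hcloser
  · by_contra! hle
    obtain ⟨t, hbt, hS', hcloser⟩ := hM.exists_sub_chiv_add_chiv_mem_Sset_closer hb hx' hlow hS
      hbv (by simp [chiv, huv.symm]; omega)
    rw [show x - chiv u + chiv v - chiv v + chiv t = x - chiv u + chiv t by abel] at hS' hcloser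
    exact (hclosest (u, t) ⟨hbu, hbt, hS'⟩).not_gt hcloser

/-- for `x ∈ 𝒮_i` (with `k̲+1 ≤ i ≤ k̄`) and `x' ∈ 𝒮_{k̲}`, there is a
minimum transition `(u,v)` with respect to `x` such that `x(u) > x'(u)` and
`x'(v) > x(v)`. -/
theorem stmt_9 {E : Type*} [Fintype E] [DecidableEq E] [Nonempty E]
    (h : (E → ℤ) → WithTop ℝ) (b : E → ℤ)
    (hM : MConvex h)
    (hfin : {x : E → ℤ | h x < ⊤}.Finite)
    (hb : ∀ e : E, b e = 0 ∨ b e = 1)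
    (kmin kmax : ℤ)
    (hkmin : (Sset h b kmin).Nonempty ∧ ∀ k : ℤ, (Sset h b k).Nonempty → kmin ≤ k)
    (hkmax : (Sset h b kmax).Nonempty ∧ ∀ k : ℤ, (Sset h b k).Nonempty → k ≤ kmax)
    (hgap : kmin + 1 ≤ kmax)
    (i : ℤ) (hi1 : kmin + 1 ≤ i) (hi2 : i ≤ kmax)
    (x : E → ℤ) (hx : x ∈ Sset h b i)
    (x' : E → ℤ) (hx' : x' ∈ Sset h b kmin) :
    ∃ u v : E, IsMinTransitionM h b x u v ∧ x' u < x u ∧ x v < x' v :=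
  stmt_9_general h b hM hfin hb kmin hkmin i hi1 x hx x' hx'
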